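/- Assume equations (4mu′) and (dkq) hold, and let μ_1, …, μ_{2g} be arbitrary real constants. Define, for nonzero ξ ≠ η: μ(ξ, η) = 4ξ⁻¹ + 4η⁻¹ + 2∑_{i=1}^g μ_{2i} ξ^i η^i + ∑_{i=0}^{g−1} μ_{2i+1}(ξ + η)ξ^i η^i; Q(ξ, η) = 𝐮'(ξ)𝐮'(η) + (2 − 𝐮(ξ))𝐮''(η) + 𝐮''(ξ)(2 − 𝐮(η)) + 2(2 − 𝐮(ξ))(2 − 𝐮(η))(ξ⁻¹ + η⁻¹ + 2u_1); and P(ξ, η) = (ξ²η²/(4(ξ − η)²))·(2μ(ξ, η) − Q(ξ, η)). Then for all pairwise distinct nonzero real ξ, η, ζ and all t ∈ ℝ^g: ∂(ζ)P(ξ, η) = ∂(ξ)P(ζ, η), where ∂(ζ) = ∑_{i=1}^g ζ^i ∂_i. -/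

import Mathlib

open scoped BigOperators

/-- Partial derivative `∂_i` (1-based index) on functions of `t : Fin g → ℝ`;
`∂_i ≡ 0` for `i = 0` or `i > g` (in particular `∂_{g+1} ≡ 0`). -/
noncomputable def pd {g : ℕ} {E : Type*} [NormedAddCommGroup E] [NormedSpace ℝ E]
    (i : ℕ) (f : (Fin g → ℝ) → E) : (Fin g → ℝ) → E :=
  fun t => if h : 1 ≤ i ∧ i ≤ g then
    fderiv ℝ f t (Pi.single (⟨i - 1, by omega⟩ : Fin g) 1) else 0

/-- The generating function `𝐮(ξ) = ∑_{i=1}^g u_i ξ^i`. -/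
noncomputable def bfu {g : ℕ} (u : ℕ → (Fin g → ℝ) → ℝ) (ξ : ℝ) :
    (Fin g → ℝ) → ℝ :=
  fun t => ∑ i ∈ Finset.Icc 1 g, u i t * ξ ^ i

/-- `𝐮'(ξ) = ∑_{i=1}^g u_i' ξ^i` (prime is `∂_x = ∂_1`). -/
noncomputable def bfu1 {g : ℕ} (u : ℕ → (Fin g → ℝ) → ℝ) (ξ : ℝ) :
    (Fin g → ℝ) → ℝ :=
  fun t => ∑ i ∈ Finset.Icc 1 g, pd 1 (u i) t * ξ ^ i

/-- `𝐮''(ξ) = ∑_{i=1}^g u_i'' ξ^i`. -/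
noncomputable def bfu2 {g : ℕ} (u : ℕ → (Fin g → ℝ) → ℝ) (ξ : ℝ) :
    (Fin g → ℝ) → ℝ :=
  fun t => ∑ i ∈ Finset.Icc 1 g, pd 1 (pd 1 (u i)) t * ξ ^ i

/-- `𝐮'''(ξ) = ∑_{i=1}^g u_i''' ξ^i`. -/
noncomputable def bfu3 {g : ℕ} (u : ℕ → (Fin g → ℝ) → ℝ) (ξ : ℝ) :
    (Fin g → ℝ) → ℝ :=
  fun t => ∑ i ∈ Finset.Icc 1 g, pd 1 (pd 1 (pd 1 (u i))) t * ξ ^ i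

/-- `D_k(2 − 𝐮(ξ)) = (1/2)(2·ξ^{1−k} + ∑_{i=1}^{k−1} (−u_i) ξ^{i−k+1})`,
the operator `D_k` applied to the Laurent-type polynomial `2 − 𝐮(ξ)`. -/
noncomputable def DkA {g : ℕ} (u : ℕ → (Fin g → ℝ) → ℝ) (k : ℕ) (ξ : ℝ) :
    (Fin g → ℝ) → ℝ :=
  fun t => (1/2 : ℝ) * (2 * ξ ^ (1 - (k:ℤ))
    + ∑ i ∈ Finset.Icc 1 (k-1), (-(u i t)) * ξ ^ ((i:ℤ) - (k:ℤ) + 1))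

/-- `D_k(𝐮'(ξ)) = (1/2)∑_{i=1}^{k−1} u_i' ξ^{i−k+1}`. -/
noncomputable def DkB {g : ℕ} (u : ℕ → (Fin g → ℝ) → ℝ) (k : ℕ) (ξ : ℝ) :
    (Fin g → ℝ) → ℝ :=
  fun t => (1/2 : ℝ) * ∑ i ∈ Finset.Icc 1 (k-1), pd 1 (u i) t * ξ ^ ((i:ℤ) - (k:ℤ) + 1)

/-- The polarization `μ(ξ, η) = 4ξ⁻¹ + 4η⁻¹ + 2∑_{i=1}^g μ_{2i} ξ^i η^i +
∑_{i=0}^{g−1} μ_{2i+1}(ξ + η)ξ^i η^i` of `μ(ξ)`. -/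
noncomputable def muP (g : ℕ) (μ : ℕ → ℝ) (ξ η : ℝ) : ℝ :=
  4 * ξ⁻¹ + 4 * η⁻¹ + 2 * ∑ i ∈ Finset.Icc 1 g, μ (2*i) * ξ ^ i * η ^ i
    + ∑ i ∈ Finset.range g, μ (2*i+1) * (ξ + η) * ξ ^ i * η ^ i

/-- `Q(ξ, η) = 𝐮'(ξ)𝐮'(η) + (2 − 𝐮(ξ))𝐮''(η) + 𝐮''(ξ)(2 − 𝐮(η)) +
2(2 − 𝐮(ξ))(2 − 𝐮(η))(ξ⁻¹ + η⁻¹ + 2u_1)`, a polarization of the left-hand side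
of equation (4mu). -/
noncomputable def Qpol {g : ℕ} (u : ℕ → (Fin g → ℝ) → ℝ) (ξ η : ℝ) :
    (Fin g → ℝ) → ℝ :=
  fun t => bfu1 u ξ t * bfu1 u η t + (2 - bfu u ξ t) * bfu2 u η t
    + bfu2 u ξ t * (2 - bfu u η t)
    + 2 * (2 - bfu u ξ t) * (2 - bfu u η t) * (ξ⁻¹ + η⁻¹ + 2 * u 1 t)

/-- The basic generating function `P(ξ, η) = (ξ²η²/(4(ξ − η)²))·(2μ(ξ, η) − Q(ξ, η))`. -/
noncomputable def Ppol {g : ℕ} (μ : ℕ → ℝ) (u : ℕ → (Fin g → ℝ) → ℝ) (ξ η : ℝ) :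
    (Fin g → ℝ) → ℝ :=
  fun t => ξ ^ 2 * η ^ 2 / (4 * (ξ - η) ^ 2) * (2 * muP g μ ξ η - Qpol u ξ η t)

/-!
Write `∂(ζ)` as the derivative in the direction `(ζ, ζ², …, ζ^g)`. Summed against `ζ^k`, the
operators `D_k` in (dkq) form geometric series, and the powers `(ζ/ξ)^g` they leave cancel, so
`∂(ζ)𝐮(ξ) = ζξ/(2(ξ − ζ))·((2 − 𝐮(ζ))𝐮'(ξ) − (2 − 𝐮(ξ))𝐮'(ζ))`. Since `∂(ζ)` commutes with `∂_x`,
differentiating in `x` gives `∂(ζ)𝐮'(ξ)` and `∂(ζ)𝐮''(ξ)`, and the coefficient of `ξ` gives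
`∂(ζ)u_1 = 𝐮'(ζ)`. By the Leibniz rule `∂(ζ)P(ξ, η)` becomes, after eliminating `𝐮'''` with (4mu′),
`-ξ²η²/(4(ξ − η)²)` times a rational expression in `ξ, η, ζ` and the values of `𝐮, 𝐮', 𝐮''` at
these points, and this product is symmetric under `ξ ↔ ζ`.
-/

open Finset
open scoped ContDiff

theorem fderiv_fderiv_apply_comm {E : Type*} [NormedAddCommGroup E] [NormedSpace ℝ E]
    {f : E → ℝ} {t : E} (hf : ContDiffAt ℝ 2 f t) (v w : E) :
    fderiv ℝ (fun s => fderiv ℝ f s v) t w = fderiv ℝ (fun s => fderiv ℝ f s w) t v := by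
  have hd : DifferentiableAt ℝ (fderiv ℝ f) t :=
    (hf.fderiv_right le_rfl).differentiableAt one_ne_zero
  rw [fderiv_clm_apply hd (differentiableAt_const v),
    fderiv_clm_apply hd (differentiableAt_const w)]
  simpa using hf.isSymmSndFDerivAt (by simp) w v

theorem fderiv_cross_apply {E : Type*} [NormedAddCommGroup E] [NormedSpace ℝ E]
    {F G : ℝ → E → ℝ} (hF : ∀ z, Differentiable ℝ (F z)) (hG : ∀ z, Differentiable ℝ (G z))
    (c w x : ℝ) (t v : E) :
    fderiv ℝ (fun s => c * ((2 - F w s) * G x s - (2 - F x s) * G w s)) t v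
      = c * ((2 - F w t) * fderiv ℝ (G x) t v - (2 - F x t) * fderiv ℝ (G w) t v
        - fderiv ℝ (F w) t v * G x t + fderiv ℝ (F x) t v * G w t) := by
  have := hF w; have := hF x; have := hG w; have := hG x
  simp (disch := fun_prop) only [fderiv_const_mul, fderiv_fun_sub, fderiv_fun_mul,
    fderiv_const_apply, smul_apply, sub_apply, add_apply, smul_eq_mul, zero_apply]
  ring

theorem zpow_natCast_sub_add_one {ξ : ℝ} (hξ : ξ ≠ 0) (i n : ℕ) :
    ξ ^ ((i : ℤ) - (n + 1 : ℕ) + 1) = ξ ^ i / ξ ^ n := by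
  rw [eq_div_iff (pow_ne_zero _ hξ), ← zpow_natCast ξ n, ← zpow_natCast ξ i, ← zpow_add₀ hξ]
  push_cast
  ring_nf

theorem sum_Icc_pow_mul_laurent (c : ℝ) (a : ℕ → ℝ) {ξ ζ : ℝ} (hξ : ξ ≠ 0) (hξζ : ξ ≠ ζ)
    (n : ℕ) :
    ∑ k ∈ Icc 1 n, ζ ^ k
        * (c * ξ ^ (1 - (k : ℤ)) + ∑ i ∈ Icc 1 (k - 1), a i * ξ ^ ((i : ℤ) - k + 1))
      = ζ * ξ / (ξ - ζ) * ((c + ∑ i ∈ Icc 1 n, a i * ζ ^ i)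
        - (ζ / ξ) ^ n * (c + ∑ i ∈ Icc 1 n, a i * ξ ^ i)) := by
  induction n with
  | zero => simp
  | succ n ih =>
    have hξn : ξ ^ (1 - ((n + 1 : ℕ) : ℤ)) = 1 / ξ ^ n := by simp
    rw [sum_Icc_succ_top (by omega), ih, sum_Icc_succ_top (by omega),
      sum_Icc_succ_top (by omega), Nat.add_sub_cancel, hξn]
    simp only [zpow_natCast_sub_add_one hξ, ← mul_div_assoc, ← sum_div, div_pow]
    have := sub_ne_zero.2 hξζ
    field_simp
    ring

section Directional

variable {g : ℕ}

def coordVec (i : ℕ) : Fin g → ℝ := fun j => if (j : ℕ) + 1 = i then 1 else 0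

def powVec (ζ : ℝ) : Fin g → ℝ := fun j => ζ ^ ((j : ℕ) + 1)

theorem pd_eq_fderiv (i : ℕ) (f : (Fin g → ℝ) → ℝ) (t : Fin g → ℝ) :
    pd i f t = fderiv ℝ f t (coordVec i) := by
  unfold pd
  split_ifs with hi
  · congr 1
    ext j
    simp only [coordVec, Pi.single_apply, Fin.ext_iff]
    congr 1
    exact propext (by omega)
  · have : (coordVec i : Fin g → ℝ) = 0 := by
      ext j
      simp only [coordVec, Pi.zero_apply, ite_eq_right_iff, one_ne_zero, imp_false]
      omega
    rw [this, map_zero]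

theorem sum_pow_mul_pd (ζ : ℝ) (f : (Fin g → ℝ) → ℝ) (t : Fin g → ℝ) :
    ∑ i ∈ Icc 1 g, ζ ^ i * pd i f t = fderiv ℝ f t (powVec ζ) := by
  have : powVec ζ = ∑ i ∈ Icc 1 g, ζ ^ i • (coordVec i : Fin g → ℝ) := by
    ext j
    simp only [powVec, coordVec, Finset.sum_apply, Pi.smul_apply, smul_eq_mul, mul_ite,
      mul_one, mul_zero, Finset.sum_ite_eq, mem_Icc]
    rw [if_pos (by omega)]
  simp [this, pd_eq_fderiv]

theorem contDiff_pd {f : (Fin g → ℝ) → ℝ} (hf : ContDiff ℝ ∞ f) (i : ℕ) :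
    ContDiff ℝ ∞ (pd i f) := by
  simp_rw [funext (pd_eq_fderiv i f)]
  exact (hf.fderiv_right le_rfl).clm_apply contDiff_const

end Directional

section GeneratingFunction

variable {g : ℕ} (u : ℕ → (Fin g → ℝ) → ℝ)

theorem bfu1_eq_bfu : bfu1 u = bfu (fun i => pd 1 (u i)) := rfl

theorem bfu2_eq_bfu1 : bfu2 u = bfu1 (fun i => pd 1 (u i)) := rfl

theorem bfu_zero (t : Fin g → ℝ) : bfu u 0 t = 0 :=
  sum_eq_zero fun i hi => by rw [zero_pow (by simp at hi; omega), mul_zero]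

theorem contDiff_bfu {n : WithTop ℕ∞} (hu : ∀ i, ContDiff ℝ n (u i)) (x : ℝ) :
    ContDiff ℝ n (bfu u x) :=
  ContDiff.sum fun i _ => (hu i).mul contDiff_const

theorem differentiable_bfu (hu : ∀ i, Differentiable ℝ (u i)) (x : ℝ) :
    Differentiable ℝ (bfu u x) := by
  unfold bfu
  fun_prop

theorem differentiable_bfu1 (hu : ∀ i, ContDiff ℝ ∞ (u i)) (x : ℝ) :
    Differentiable ℝ (bfu1 u x) :=
  differentiable_bfu _ (fun i => (contDiff_pd (hu i) 1).differentiable (by simp)) x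

theorem differentiable_bfu2 (hu : ∀ i, ContDiff ℝ ∞ (u i)) (x : ℝ) :
    Differentiable ℝ (bfu2 u x) :=
  differentiable_bfu1 _ (fun i => contDiff_pd (hu i) 1) x

theorem fderiv_bfu_apply (hu : ∀ i, Differentiable ℝ (u i)) (x : ℝ) (t v : Fin g → ℝ) :
    fderiv ℝ (bfu u x) t v = ∑ i ∈ Icc 1 g, fderiv ℝ (u i) t v * x ^ i := by
  unfold bfu
  rw [fderiv_fun_sum fun i _ => ((hu i).mul_const _).differentiableAt]
  simp [fderiv_mul_const (hu _).differentiableAt, mul_comm]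

theorem fderiv_bfu_coordVec_one (hu : ∀ i, Differentiable ℝ (u i)) (x : ℝ) (t : Fin g → ℝ) :
    fderiv ℝ (bfu u x) t (coordVec 1) = bfu1 u x t := by
  simp [fderiv_bfu_apply u hu, bfu1, pd_eq_fderiv]

theorem fderiv_bfu1_coordVec_one (hu : ∀ i, ContDiff ℝ ∞ (u i)) (x : ℝ) (t : Fin g → ℝ) :
    fderiv ℝ (bfu1 u x) t (coordVec 1) = bfu2 u x t :=
  fderiv_bfu_coordVec_one _ (fun i => (contDiff_pd (hu i) 1).differentiable (by simp)) x t

theorem fderiv_bfu2_coordVec_one (hu : ∀ i, ContDiff ℝ ∞ (u i)) (x : ℝ) (t : Fin g → ℝ) :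
    fderiv ℝ (bfu2 u x) t (coordVec 1) = bfu3 u x t :=
  fderiv_bfu1_coordVec_one _ (fun i => contDiff_pd (hu i) 1) x t

theorem fderiv_bfu1_apply_comm (hu : ∀ i, ContDiff ℝ ∞ (u i)) (x : ℝ) (t v : Fin g → ℝ) :
    fderiv ℝ (bfu1 u x) t v = fderiv ℝ (fun s => fderiv ℝ (bfu u x) s v) t (coordVec 1) := by
  have hB : bfu1 u x = fun s => fderiv ℝ (bfu u x) s (coordVec 1) :=
    funext fun s => (fderiv_bfu_coordVec_one u (fun i => (hu i).differentiable (by simp)) x s).symm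
  rw [hB, fderiv_fderiv_apply_comm ((contDiff_bfu u hu x).contDiffAt.of_le (by norm_cast))]

theorem differentiable_Qpol (hu : ∀ i, ContDiff ℝ ∞ (u i)) (x y : ℝ) :
    Differentiable ℝ (Qpol u x y) := by
  have hu' i : Differentiable ℝ (u i) := (hu i).differentiable (by simp)
  have := differentiable_bfu u hu' x; have := differentiable_bfu u hu' y
  have := differentiable_bfu1 u hu x; have := differentiable_bfu1 u hu y
  have := differentiable_bfu2 u hu x; have := differentiable_bfu2 u hu y
  have := hu' 1
  unfold Qpol
  fun_prop

theorem fderiv_Qpol_apply (hu : ∀ i, ContDiff ℝ ∞ (u i)) (x y : ℝ) (t v : Fin g → ℝ) :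
    fderiv ℝ (Qpol u x y) t v
      = fderiv ℝ (bfu1 u x) t v * bfu1 u y t + bfu1 u x t * fderiv ℝ (bfu1 u y) t v
        - fderiv ℝ (bfu u x) t v * bfu2 u y t + (2 - bfu u x t) * fderiv ℝ (bfu2 u y) t v
        + fderiv ℝ (bfu2 u x) t v * (2 - bfu u y t) - bfu2 u x t * fderiv ℝ (bfu u y) t v
        - 2 * (fderiv ℝ (bfu u x) t v * (2 - bfu u y t)
            + (2 - bfu u x t) * fderiv ℝ (bfu u y) t v) * (x⁻¹ + y⁻¹ + 2 * u 1 t)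
        + 4 * (2 - bfu u x t) * (2 - bfu u y t) * fderiv ℝ (u 1) t v := by
  have hu' i : Differentiable ℝ (u i) := (hu i).differentiable (by simp)
  have := differentiable_bfu u hu' x; have := differentiable_bfu u hu' y
  have := differentiable_bfu1 u hu x; have := differentiable_bfu1 u hu y
  have := differentiable_bfu2 u hu x; have := differentiable_bfu2 u hu y
  have := hu' 1
  unfold Qpol
  simp (disch := fun_prop) only [fderiv_fun_add, fderiv_const_mul, fderiv_fun_sub, fderiv_fun_mul,
    fderiv_const_apply, smul_apply, sub_apply, add_apply, smul_eq_mul, zero_apply]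
  ring

theorem fderiv_Ppol_apply (μ : ℕ → ℝ) (hu : ∀ i, ContDiff ℝ ∞ (u i)) (x y : ℝ)
    (t v : Fin g → ℝ) :
    fderiv ℝ (Ppol μ u x y) t v
      = -(x ^ 2 * y ^ 2 / (4 * (x - y) ^ 2)) * fderiv ℝ (Qpol u x y) t v := by
  have := differentiable_Qpol u hu x y
  unfold Ppol
  simp (disch := fun_prop) only [fderiv_const_mul, fderiv_const_sub, smul_apply, neg_apply,
    smul_eq_mul]
  ring

end GeneratingFunction

/-- `∂(w)Q(x, y)`, written through `A = 2 − 𝐮`, `B = 𝐮'`, `C = 𝐮''`, `U = u_1`, `V = u_1'`,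
once (dkq) has been used for `∂(w)` and (4mu′) to replace `𝐮'''` by `D`. -/
noncomputable def dQ (A B C : ℝ → ℝ) (U V w x y : ℝ) : ℝ :=
  let D z := 4 * (z⁻¹ + U) * B z - 2 * V * A z
  let W (F G : ℝ → ℝ) (z : ℝ) := w * z / (2 * (z - w)) * (F w * G z - F z * G w)
  let dA z := -W A B z
  let dB z := W A C z
  let dC z := W A D z - W B C z
  dB x * B y + B x * dB y + dA x * C y + A x * dC y + dC x * A y + C x * dA y
    + 2 * (dA x * A y + A x * dA y) * (x⁻¹ + y⁻¹ + 2 * U) + 4 * A x * A y * B w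

theorem dQ_symm (A B C : ℝ → ℝ) (U V : ℝ) {w x y : ℝ} (hw : w ≠ 0) (hx : x ≠ 0) (hy : y ≠ 0)
    (hwx : w ≠ x) (hwy : w ≠ y) (hxy : x ≠ y) :
    x ^ 2 * y ^ 2 / (4 * (x - y) ^ 2) * dQ A B C U V w x y
      = w ^ 2 * y ^ 2 / (4 * (w - y) ^ 2) * dQ A B C U V x w y := by
  have := sub_ne_zero.2 hwx; have := sub_ne_zero.2 hwy; have := sub_ne_zero.2 hxy
  have := sub_ne_zero.2 hwx.symm; have := sub_ne_zero.2 hwy.symm; have := sub_ne_zero.2 hxy.symm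
  simp only [dQ]
  field_simp
  ring

section Dkq

variable {g : ℕ} (u : ℕ → (Fin g → ℝ) → ℝ)

def SolvesDkq : Prop :=
  ∀ k, 1 ≤ k → k ≤ g → ∀ t, ∀ ξ : ℝ, ξ ≠ 0 →
    pd k (bfu u ξ) t = DkA u k ξ t * bfu1 u ξ t - DkB u k ξ t * (2 - bfu u ξ t)

theorem sum_pow_mul_DkA (t : Fin g → ℝ) {ξ ζ : ℝ} (hξ : ξ ≠ 0) (hξζ : ξ ≠ ζ) :
    ∑ k ∈ Icc 1 g, ζ ^ k * DkA u k ξ t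
      = ζ * ξ / (2 * (ξ - ζ)) * ((2 - bfu u ζ t) - (ζ / ξ) ^ g * (2 - bfu u ξ t)) := by
  simp only [DkA, mul_left_comm _ (1 / 2 : ℝ), ← mul_sum]
  rw [sum_Icc_pow_mul_laurent _ _ hξ hξζ]
  simp only [bfu, neg_mul, sum_neg_distrib]
  have := sub_ne_zero.2 hξζ
  field_simp
  ring

theorem sum_pow_mul_DkB (t : Fin g → ℝ) {ξ ζ : ℝ} (hξ : ξ ≠ 0) (hξζ : ξ ≠ ζ) :
    ∑ k ∈ Icc 1 g, ζ ^ k * DkB u k ξ t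
      = ζ * ξ / (2 * (ξ - ζ)) * (bfu1 u ζ t - (ζ / ξ) ^ g * bfu1 u ξ t) := by
  have h := sum_Icc_pow_mul_laurent 0 (fun i => pd 1 (u i) t) hξ hξζ g
  simp only [zero_mul, zero_add] at h
  simp only [DkB, mul_left_comm _ (1 / 2 : ℝ), ← mul_sum, h, bfu1]
  have := sub_ne_zero.2 hξζ
  field_simp

theorem fderiv_bfu_powVec (hdkq : SolvesDkq u) (t : Fin g → ℝ) {x w : ℝ} (hx : x ≠ 0)
    (hxw : x ≠ w) :
    fderiv ℝ (bfu u x) t (powVec w)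
      = w * x / (2 * (x - w))
        * ((2 - bfu u w t) * bfu1 u x t - (2 - bfu u x t) * bfu1 u w t) := by
  rw [← sum_pow_mul_pd]
  calc ∑ k ∈ Icc 1 g, w ^ k * pd k (bfu u x) t
      = (∑ k ∈ Icc 1 g, w ^ k * DkA u k x t) * bfu1 u x t
        - (∑ k ∈ Icc 1 g, w ^ k * DkB u k x t) * (2 - bfu u x t) := by
        rw [sum_mul, sum_mul, ← sum_sub_distrib]
        refine sum_congr rfl fun k hk => ?_
        rw [hdkq k (mem_Icc.1 hk).1 (mem_Icc.1 hk).2 t x hx]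
        ring
    _ = _ := by
        rw [sum_pow_mul_DkA u t hx hxw, sum_pow_mul_DkB u t hx hxw]
        ring

theorem fderiv_bfu1_powVec (hu : ∀ i, ContDiff ℝ ∞ (u i)) (hdkq : SolvesDkq u)
    (t : Fin g → ℝ) {x w : ℝ} (hx : x ≠ 0) (hxw : x ≠ w) :
    fderiv ℝ (bfu1 u x) t (powVec w)
      = w * x / (2 * (x - w))
        * ((2 - bfu u w t) * bfu2 u x t - (2 - bfu u x t) * bfu2 u w t) := by
  have hu' i : Differentiable ℝ (u i) := (hu i).differentiable (by simp)
  rw [fderiv_bfu1_apply_comm u hu, funext fun s => fderiv_bfu_powVec u hdkq s hx hxw,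
    fderiv_cross_apply (differentiable_bfu u hu') (differentiable_bfu1 u hu)]
  simp only [fderiv_bfu_coordVec_one u hu', fderiv_bfu1_coordVec_one u hu]
  ring

theorem fderiv_bfu2_powVec (hu : ∀ i, ContDiff ℝ ∞ (u i)) (hdkq : SolvesDkq u)
    (t : Fin g → ℝ) {x w : ℝ} (hx : x ≠ 0) (hxw : x ≠ w) :
    fderiv ℝ (bfu2 u x) t (powVec w)
      = w * x / (2 * (x - w)) * ((2 - bfu u w t) * bfu3 u x t - (2 - bfu u x t) * bfu3 u w t
        - bfu1 u w t * bfu2 u x t + bfu1 u x t * bfu2 u w t) := by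
  have hu' i : Differentiable ℝ (u i) := (hu i).differentiable (by simp)
  rw [bfu2_eq_bfu1, fderiv_bfu1_apply_comm _ (fun i => contDiff_pd (hu i) 1), ← bfu1_eq_bfu,
    funext fun s => fderiv_bfu1_powVec u hu hdkq s hx hxw,
    fderiv_cross_apply (differentiable_bfu u hu') (differentiable_bfu2 u hu)]
  simp only [fderiv_bfu_coordVec_one u hu', fderiv_bfu2_coordVec_one u hu]
  rw [← bfu2_eq_bfu1]

theorem fderiv_u_one_powVec (hg : 1 ≤ g) (hu : ∀ i, Differentiable ℝ (u i))
    (hdkq : SolvesDkq u) (t : Fin g → ℝ) {w : ℝ} (hw : w ≠ 0) :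
    fderiv ℝ (u 1) t (powVec w) = bfu1 u w t := by
  set c : ℕ → ℝ := fun i => fderiv ℝ (u i) t (powVec w)
  -- `fderiv_bfu_powVec` divided by `x` is a polynomial identity in `x`; evaluate it at `x = 0`.
  have hpoly : (fun x => 2 * (x - w) * ∑ i ∈ Icc 1 g, c i * x ^ (i - 1))
      = fun x => w * ((2 - bfu u w t) * bfu1 u x t - (2 - bfu u x t) * bfu1 u w t) := by
    refine Continuous.ext_on ((Set.to_countable {0, w}).dense_compl ℝ) (by fun_prop)
      (by simp only [bfu, bfu1]; fun_prop) fun x hx => ?_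
    simp only [Set.mem_compl_iff, Set.mem_insert_iff, Set.mem_singleton_iff, not_or] at hx
    have hsum : ∑ i ∈ Icc 1 g, c i * x ^ i = x * ∑ i ∈ Icc 1 g, c i * x ^ (i - 1) := by
      rw [mul_sum]
      refine sum_congr rfl fun i hi => ?_
      rw [mul_left_comm, ← pow_succ', Nat.sub_add_cancel (mem_Icc.1 hi).1]
    have key := fderiv_bfu_powVec u hdkq t hx.1 hx.2
    rw [fderiv_bfu_apply u hu, hsum] at key
    have := sub_ne_zero.2 hx.2
    field_simp at key
    exact mul_left_cancel₀ hx.1 (by linear_combination key)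
  have h0 := congrFun hpoly 0
  have hc : ∑ i ∈ Icc 1 g, c i * (0 : ℝ) ^ (i - 1) = c 1 := by
    rw [sum_eq_single_of_mem 1 (mem_Icc.2 ⟨le_rfl, hg⟩) fun i hi hi1 => ?_]
    · simp
    · rw [zero_pow (by simp at hi; omega), mul_zero]
  have hB0 : bfu1 u 0 t = 0 := bfu_zero _ t
  rw [hc, bfu_zero, hB0] at h0
  exact mul_left_cancel₀ (mul_ne_zero two_ne_zero hw) (by linear_combination -h0)

theorem fderiv_Qpol_powVec (hg : 1 ≤ g) (hu : ∀ i, ContDiff ℝ ∞ (u i))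
    (h4mu' : ∀ t, ∀ ξ : ℝ, ξ ≠ 0 →
      bfu3 u ξ t + 2 * pd 1 (u 1) t * (2 - bfu u ξ t) - 4 * (ξ⁻¹ + u 1 t) * bfu1 u ξ t = 0)
    (hdkq : SolvesDkq u) (t : Fin g → ℝ) {w x y : ℝ} (hw : w ≠ 0) (hx : x ≠ 0) (hy : y ≠ 0)
    (hxw : x ≠ w) (hyw : y ≠ w) :
    fderiv ℝ (Qpol u x y) t (powVec w)
      = dQ (fun z => 2 - bfu u z t) (fun z => bfu1 u z t) (fun z => bfu2 u z t) (u 1 t)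
          (pd 1 (u 1) t) w x y := by
  have h3 z (hz : z ≠ 0) : bfu3 u z t
      = 4 * (z⁻¹ + u 1 t) * bfu1 u z t - 2 * pd 1 (u 1) t * (2 - bfu u z t) := by
    linear_combination h4mu' t z hz
  rw [fderiv_Qpol_apply u hu, fderiv_bfu_powVec u hdkq t hx hxw,
    fderiv_bfu_powVec u hdkq t hy hyw, fderiv_bfu1_powVec u hu hdkq t hx hxw,
    fderiv_bfu1_powVec u hu hdkq t hy hyw, fderiv_bfu2_powVec u hu hdkq t hx hxw,
    fderiv_bfu2_powVec u hu hdkq t hy hyw,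
    fderiv_u_one_powVec u hg (fun i => (hu i).differentiable (by simp)) hdkq t hw,
    h3 x hx, h3 y hy, h3 w hw]
  simp only [dQ]
  ring

end Dkq

/-- Assume equations (4mu′) and (dkq), and let `μ_1, …, μ_{2g}` be
arbitrary real constants. Then for all pairwise distinct nonzero real `ξ, η, ζ` and
all `t`: `∂(ζ)P(ξ, η) = ∂(ξ)P(ζ, η)`, where `∂(ζ) = ∑_{i=1}^g ζ^i ∂_i`. -/
theorem statement17 (g : ℕ) (hg : 1 ≤ g) (u : ℕ → (Fin g → ℝ) → ℝ)
    (hu : ∀ i, ContDiff ℝ (⊤ : ℕ∞) (u i))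
    (h4mu' : ∀ t, ∀ ξ : ℝ, ξ ≠ 0 →
      bfu3 u ξ t + 2 * pd 1 (u 1) t * (2 - bfu u ξ t)
        - 4 * (ξ⁻¹ + u 1 t) * bfu1 u ξ t = 0)
    (hdkq : ∀ k, 1 ≤ k → k ≤ g → ∀ t, ∀ ξ : ℝ, ξ ≠ 0 →
      pd k (bfu u ξ) t = DkA u k ξ t * bfu1 u ξ t - DkB u k ξ t * (2 - bfu u ξ t))
    (μ : ℕ → ℝ) :
    ∀ ξ η ζ : ℝ, ξ ≠ 0 → η ≠ 0 → ζ ≠ 0 → ξ ≠ η → ξ ≠ ζ → η ≠ ζ → ∀ t,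
      ∑ i ∈ Finset.Icc 1 g, ζ ^ i * pd i (Ppol μ u ξ η) t
        = ∑ i ∈ Finset.Icc 1 g, ξ ^ i * pd i (Ppol μ u ζ η) t := by
  intro ξ η ζ hξ hη hζ hξη hξζ hηζ t
  rw [sum_pow_mul_pd, sum_pow_mul_pd, fderiv_Ppol_apply u μ hu, fderiv_Ppol_apply u μ hu,
    fderiv_Qpol_powVec u hg hu h4mu' hdkq t hζ hξ hη hξζ hηζ,
    fderiv_Qpol_powVec u hg hu h4mu' hdkq t hξ hζ hη hξζ.symm hξη.symm, neg_mul, neg_mul,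
    dQ_symm _ _ _ _ _ hζ hξ hη hξζ.symm hηζ.symm hξη]
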